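/- The family p^{LR}_{l,r} = 3·C(l+r, l)·∫₀¹ (1-a)³ · aˡ⁺ʳ/(1+a)^{l+r+1} da, indexed by nonnegative integers l, r, is a probability distribution: ∑_{l≥0} ∑_{r≥0} p^{LR}_{l,r} = 1. -/

import Mathlib

noncomputable def pLR (l r : ℕ) : ℝ :=
  3 * (Nat.choose (l + r) l : ℝ) *
    ∫ a in (0:ℝ)..1, (1 - a)^3 * a^(l + r) / (1 + a)^(l + r + 1)

/-!
Working in `ℝ≥0∞`, Tonelli turns the double sum into `∫₀¹ ∑_{l,r} p_{l,r}(a) da` with no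
summability side conditions. With `x = a / (1 + a)`, grouping by `n = l + r` and the binomial
theorem give `∑_{l,r} C(l+r,l) x^(l+r) = ∑_n (2x)^n = (1 + a) / (1 - a)`, so the summed density is
`3 (1 - a)^2`, whose integral over `[0, 1]` is `1`.
-/

open MeasureTheory Set Finset
open scoped ENNReal

theorem ENNReal.tsum_prod_eq_tsum_sum_antidiagonal (f : ℕ × ℕ → ℝ≥0∞) :
    ∑' p, f p = ∑' n, ∑ p ∈ antidiagonal n, f p := by
  rw [← Finset.HasAntidiagonal.sigmaAntidiagonalEquivProd.tsum_eq, ENNReal.tsum_sigma']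
  exact tsum_congr fun n => Finset.tsum_subtype _ f

theorem ENNReal.tsum_choose_mul_pow_mul_pow (x y : ℝ≥0∞) :
    ∑' p : ℕ × ℕ, ((p.1 + p.2).choose p.1 : ℝ≥0∞) * x ^ p.1 * y ^ p.2 = (1 - (x + y))⁻¹ := by
  rw [ENNReal.tsum_prod_eq_tsum_sum_antidiagonal, ← ENNReal.tsum_geometric]
  refine tsum_congr fun n => ?_
  rw [(Commute.all x y).add_pow']
  refine sum_congr rfl fun p hp => ?_
  rw [mem_antidiagonal.mp hp, nsmul_eq_mul, mul_assoc]

theorem ENNReal.tsum_tsum_ofReal_toReal {α β : Type*} {f : α → β → ℝ} (hf : ∀ a b, 0 ≤ f a b)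
    (hfin : ∑' a, ∑' b, ENNReal.ofReal (f a b) ≠ ∞) :
    (∑' a, ∑' b, ENNReal.ofReal (f a b)).toReal = ∑' a, ∑' b, f a b := by
  have hinner (a : α) : ∑' b, ENNReal.ofReal (f a b) ≠ ∞ :=
    ne_top_of_le_ne_top hfin (ENNReal.le_tsum a)
  rw [ENNReal.tsum_toReal_eq hinner]
  refine tsum_congr fun a => ?_
  rw [ENNReal.tsum_toReal_eq fun _ => ENNReal.ofReal_ne_top]
  exact tsum_congr fun b => ENNReal.toReal_ofReal (hf a b)

noncomputable def pLRDensity (l r : ℕ) (a : ℝ) : ℝ :=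
  3 * (Nat.choose (l + r) l : ℝ) * ((1 - a) ^ 3 * a ^ (l + r) / (1 + a) ^ (l + r + 1))

lemma pLR_eq_integral (l r : ℕ) : pLR l r = ∫ a in Ioc (0 : ℝ) 1, pLRDensity l r a := by
  rw [pLR, ← intervalIntegral.integral_const_mul, intervalIntegral.integral_of_le zero_le_one]
  rfl

lemma pLRDensity_nonneg (l r : ℕ) {a : ℝ} (ha : a ∈ Icc (0 : ℝ) 1) : 0 ≤ pLRDensity l r a := by
  obtain ⟨ha0, ha1⟩ := ha
  have : 0 ≤ 1 - a := by linarith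
  unfold pLRDensity
  positivity

lemma pLRDensity_eq_mul_pow (l r : ℕ) {a : ℝ} (ha : 1 + a ≠ 0) :
    pLRDensity l r a =
      3 * (1 - a) ^ 3 / (1 + a) * ((l + r).choose l * (a / (1 + a)) ^ l * (a / (1 + a)) ^ r) := by
  rw [pLRDensity, div_pow, div_pow, pow_succ]
  field_simp
  ring

lemma tsum_ofReal_pLRDensity {a : ℝ} (ha : a ∈ Ioo (0 : ℝ) 1) :
    ∑' p : ℕ × ℕ, ENNReal.ofReal (pLRDensity p.1 p.2 a) = ENNReal.ofReal (3 * (1 - a) ^ 2) := by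
  obtain ⟨ha0, ha1⟩ := ha
  have h1a : 0 < 1 + a := by linarith
  have h1a' : 0 < 1 - a := by linarith
  set x := a / (1 + a) with hx_def
  have hx : 0 ≤ x := by positivity
  have hfactor (p : ℕ × ℕ) : ENNReal.ofReal (pLRDensity p.1 p.2 a) =
      ENNReal.ofReal (3 * (1 - a) ^ 3 / (1 + a)) *
        (((p.1 + p.2).choose p.1 : ℝ≥0∞) * ENNReal.ofReal x ^ p.1 * ENNReal.ofReal x ^ p.2) := by
    rw [pLRDensity_eq_mul_pow _ _ h1a.ne', ENNReal.ofReal_mul (by positivity),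
      ENNReal.ofReal_mul (by positivity), ENNReal.ofReal_mul (by positivity),
      ENNReal.ofReal_natCast, ENNReal.ofReal_pow hx, ENNReal.ofReal_pow hx]
  have hgeom : 1 - (ENNReal.ofReal x + ENNReal.ofReal x) = ENNReal.ofReal ((1 - a) / (1 + a)) := by
    rw [← ENNReal.ofReal_add hx hx, ← ENNReal.ofReal_one, ← ENNReal.ofReal_sub _ (by positivity)]
    congr 1
    rw [hx_def]
    field_simp
    ring
  rw [tsum_congr hfactor, ENNReal.tsum_mul_left, ENNReal.tsum_choose_mul_pow_mul_pow, hgeom,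
    ← ENNReal.ofReal_inv_of_pos (by positivity), ← ENNReal.ofReal_mul (by positivity)]
  congr 1
  field_simp

lemma ofReal_pLR (l r : ℕ) :
    ENNReal.ofReal (pLR l r) = ∫⁻ a in Ioc (0 : ℝ) 1, ENNReal.ofReal (pLRDensity l r a) := by
  have hcont : ContinuousOn (pLRDensity l r) (Icc 0 1) := by
    unfold pLRDensity
    refine ContinuousOn.mul continuousOn_const (ContinuousOn.div (by fun_prop) (by fun_prop) ?_)
    intro a ha
    have : 0 < 1 + a := by linarith [ha.1]
    positivity
  rw [pLR_eq_integral, ofReal_integral_eq_lintegral_ofReal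
    ((hcont.integrableOn_Icc).mono_set Ioc_subset_Icc_self)]
  exact (ae_restrict_iff' measurableSet_Ioc).mpr
    (ae_of_all _ fun a ha => pLRDensity_nonneg l r (Ioc_subset_Icc_self ha))

lemma tsum_tsum_ofReal_pLR : ∑' l, ∑' r, ENNReal.ofReal (pLR l r) = 1 := by
  have hmeas (p : ℕ × ℕ) : Measurable fun a => ENNReal.ofReal (pLRDensity p.1 p.2 a) := by
    unfold pLRDensity
    fun_prop
  calc ∑' l, ∑' r, ENNReal.ofReal (pLR l r)
      = ∫⁻ a in Ioc (0 : ℝ) 1, ∑' p : ℕ × ℕ, ENNReal.ofReal (pLRDensity p.1 p.2 a) := by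
        rw [← ENNReal.tsum_prod, lintegral_tsum fun p => (hmeas p).aemeasurable]
        exact tsum_congr fun p => ofReal_pLR p.1 p.2
    _ = ∫⁻ a in Ioo (0 : ℝ) 1, ENNReal.ofReal (3 * (1 - a) ^ 2) := by
        rw [← Measure.restrict_congr_set Ioo_ae_eq_Ioc]
        exact setLIntegral_congr_fun measurableSet_Ioo fun a ha => tsum_ofReal_pLRDensity ha
    _ = ENNReal.ofReal (∫ a in (0 : ℝ)..1, 3 * (1 - a) ^ 2) := by
        rw [intervalIntegral.integral_of_le zero_le_one, integral_Ioc_eq_integral_Ioo,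
          ofReal_integral_eq_lintegral_ofReal]
        · exact (Continuous.integrableOn_Ioc (by fun_prop)).mono_set Ioo_subset_Ioc_self
        · exact ae_of_all _ fun a => by positivity
    _ = 1 := by
        rw [intervalIntegral.integral_const_mul, intervalIntegral.integral_comp_sub_left
          (fun a => a ^ 2)]
        norm_num

theorem stit_pLR_prob_dist :
    (∑' l : ℕ, ∑' r : ℕ, pLR l r) = 1 := by
  have hnonneg (l r : ℕ) : 0 ≤ pLR l r := by
    rw [pLR_eq_integral]
    exact setIntegral_nonneg measurableSet_Ioc fun a ha =>
      pLRDensity_nonneg l r (Ioc_subset_Icc_self ha)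
  rw [← ENNReal.tsum_tsum_ofReal_toReal hnonneg (by simp [tsum_tsum_ofReal_pLR]),
    tsum_tsum_ofReal_pLR, ENNReal.toReal_one]
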